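/- Let f : ℂ^r → ℂ have totally symmetric third derivatives f_{ijk}, let K = Σ_l α_l f_l be invertible, and suppose f_i K^{-1} f_j = f_j K^{-1} f_i for all i,j with this particular K. Define C_i := K^{-1} f_i. Then the C_i pairwise commute and e := Σ_l α_l ∂/∂a_l acts as the identity in the sense that Σ_l α_l C_l = I. -/
import Mathlib


open Matrix

theorem C_commute_and_unit
    (r : ℕ) (F : Fin r → Matrix (Fin r) (Fin r) ℂ) (α : Fin r → ℂ)
    (hsymm : ∀ i j k : Fin r, F i j k = F j i k ∧ F i j k = F i k j)
    (K : Matrix (Fin r) (Fin r) ℂ) (hK : K = ∑ l, α l • F l)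
    (hKinv : IsUnit K.det)
    (hwdvv : ∀ i j, F i * K⁻¹ * F j = F j * K⁻¹ * F i)
    (C : Fin r → Matrix (Fin r) (Fin r) ℂ) (hC : ∀ i, C i = K⁻¹ * F i) :
    (∀ i j, C i * C j = C j * C i) ∧ (∑ l, α l • C l = 1) := by
  constructor
  · intro i j
    rw [hC, hC]
    calc K⁻¹ * F i * (K⁻¹ * F j) = K⁻¹ * (F i * K⁻¹ * F j) := by noncomm_ring
      _ = K⁻¹ * (F j * K⁻¹ * F i) := by rw [hwdvv]
      _ = K⁻¹ * F j * (K⁻¹ * F i) := by noncomm_ring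
  · have : ∑ l, α l • C l = K⁻¹ * ∑ l, α l • F l := by
      rw [Finset.mul_sum]
      exact Finset.sum_congr rfl fun l _ => by rw [hC, Matrix.mul_smul]
    rw [this, ← hK, Matrix.nonsing_inv_mul K hKinv]
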